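/- Every continuous one-parameter compact subgroup (i.e. every subgroup isomorphic to the circle group U(1)) of the three-dimensional Lorentz group O(1,2) fixes a timelike vector; consequently, the three-dimensional Minkowski space ℝ^{1,2} decomposes under such a subgroup into an orthogonal direct sum of an invariant one-dimensional timelike subspace and an invariant two-dimensional spacelike subspace. -/

import Mathlib

/-- The Minkowski form on ℝ^{1,2}. -/
noncomputable def eta (x y : Fin 3 → ℝ) : ℝ := -(x 0 * y 0) + x 1 * y 1 + x 2 * y 2

/-!
Average the orbit of `e₀ = (1, 0, 0)` against Haar measure on the group; the average is fixed
because Haar measure is invariant. Every orbit point is a unit timelike vector, and since the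
group is connected and contains `1`, the orbit stays in the future cone `‖(x₁, x₂)‖ < x₀`.
This cone is preserved by averaging, since `‖∫ (x₁, x₂)‖ ≤ ∫ ‖(x₁, x₂)‖ < ∫ x₀`, so the
average is timelike. The η-orthogonal complement of a timelike vector is spacelike by the
Cauchy–Schwarz inequality for the spatial parts, and it is complementary since `η(v, v) ≠ 0`.
-/

open MeasureTheory

/-- The spatial part `(x₁, x₂)` of `x`, viewed in `ℂ` to get the Euclidean norm and inner
product. -/
noncomputable def spatial : (Fin 3 → ℝ) →L[ℝ] ℂ :=
  Complex.equivRealProdCLM.symm.toContinuousLinearMap.comp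
    ((ContinuousLinearMap.proj 1).prod (ContinuousLinearMap.proj 2))

@[simp] lemma spatial_re (x : Fin 3 → ℝ) : (spatial x).re = x 1 := rfl
@[simp] lemma spatial_im (x : Fin 3 → ℝ) : (spatial x).im = x 2 := rfl

lemma eq_zero_of_spatial_eq_zero {x : Fin 3 → ℝ} (h0 : x 0 = 0) (hs : spatial x = 0) : x = 0 := by
  ext i
  fin_cases i
  exacts [h0, congrArg Complex.re hs, congrArg Complex.im hs]

lemma eta_eq (x y : Fin 3 → ℝ) : eta x y = inner ℝ (spatial x) (spatial y) - x 0 * y 0 := by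
  simp only [eta, Complex.inner, Complex.mul_re, Complex.conj_re, Complex.conj_im, spatial_re,
    spatial_im]
  ring

lemma eta_self_eq (x : Fin 3 → ℝ) : eta x x = ‖spatial x‖ ^ 2 - x 0 ^ 2 := by
  rw [eta_eq, real_inner_self_eq_norm_sq, sq (x 0)]

lemma eta_self_neg_iff (x : Fin 3 → ℝ) : eta x x < 0 ↔ ‖spatial x‖ < |x 0| := by
  rw [eta_self_eq, sub_neg, sq_lt_sq, abs_norm]

lemma ne_zero_of_eta_self_neg {x : Fin 3 → ℝ} (hx : eta x x < 0) : x 0 ≠ 0 :=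
  abs_pos.1 ((norm_nonneg _).trans_lt ((eta_self_neg_iff x).1 hx))

lemma eta_self_pos_of_eta_eq_zero {v w : Fin 3 → ℝ} (hv : eta v v < 0) (hvw : eta v w = 0)
    (hw : w ≠ 0) : 0 < eta w w := by
  rw [eta_self_neg_iff] at hv
  rw [eta_eq, sub_eq_zero] at hvw
  rw [eta_self_eq, sub_pos, sq_lt_sq, abs_norm]
  by_contra! hle
  have hcs : |v 0| * |w 0| ≤ ‖spatial v‖ * |w 0| := by
    rw [← abs_mul, ← hvw]
    exact (abs_real_inner_le_norm _ _).trans (by gcongr)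
  have hw0 : w 0 = 0 := by
    rw [← abs_nonpos_iff]
    nlinarith [abs_nonneg (w 0), norm_nonneg (spatial v)]
  rw [hw0, abs_zero, norm_le_zero_iff] at hle
  exact hw (eq_zero_of_spatial_eq_zero hw0 hle)

lemma exists_smul_add_of_eta_self_ne_zero {v : Fin 3 → ℝ} (hv : eta v v ≠ 0) (x : Fin 3 → ℝ) :
    ∃ (a : ℝ) (w : Fin 3 → ℝ), eta v w = 0 ∧ x = a • v + w := by
  set a := eta v x / eta v v
  refine ⟨a, x - a • v, ?_, by abel⟩
  have hlin : eta v (x - a • v) = eta v x - a * eta v v := by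
    simp only [eta, Pi.sub_apply, Pi.smul_apply, smul_eq_mul]
    ring
  rw [hlin, div_mul_cancel₀ _ hv, sub_self]

lemma Continuous.pos_of_forall_ne_zero {X : Type*} [TopologicalSpace X] [PreconnectedSpace X]
    {g : X → ℝ} (hg : Continuous g) (hne : ∀ x, g x ≠ 0) {a : X} (ha : 0 < g a) (x : X) :
    0 < g x := by
  by_contra! hx
  obtain ⟨y, hy⟩ := intermediate_value_univ x a hg ⟨hx, ha.le⟩
  exact hne y hy

lemma norm_spatial_integral_lt {X : Type*} [TopologicalSpace X] [CompactSpace X]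
    [MeasurableSpace X] [OpensMeasurableSpace X] {μ : Measure X} [IsFiniteMeasure μ]
    [μ.IsOpenPosMeasure] [Nonempty X] {f : X → Fin 3 → ℝ} (hf : Continuous f)
    (hfuture : ∀ x, ‖spatial (f x)‖ < f x 0) :
    ‖spatial (∫ x, f x ∂μ)‖ < (∫ x, f x ∂μ) 0 := by
  have hint : ∀ {E : Type} [NormedAddCommGroup E] {g : X → E}, Continuous g → Integrable g μ :=
    fun hg => hg.integrable_of_hasCompactSupport (HasCompactSupport.of_compactSpace _)
  have hf0 : Continuous fun x => f x 0 := (continuous_apply 0).comp hf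
  have hsf : Continuous fun x => spatial (f x) := spatial.continuous.comp hf
  have hgap : 0 < ∫ x, (f x 0 - ‖spatial (f x)‖) ∂μ :=
    integral_pos_of_integrable_nonneg_nonzero (hf0.sub hsf.norm) (hint (hf0.sub hsf.norm))
      (fun x => (sub_pos.2 (hfuture x)).le) (x := Classical.arbitrary X)
      (sub_pos.2 (hfuture _)).ne'
  rw [integral_sub (hint hf0) (hint hsf.norm), sub_pos] at hgap
  calc ‖spatial (∫ x, f x ∂μ)‖ = ‖∫ x, spatial (f x) ∂μ‖ := by
        rw [spatial.integral_comp_comm (hint hf)]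
    _ ≤ ∫ x, ‖spatial (f x)‖ ∂μ := norm_integral_le_integral_norm _
    _ < ∫ x, f x 0 ∂μ := hgap
    _ = (∫ x, f x ∂μ) 0 := (eval_integral (fun i => hint ((continuous_apply i).comp hf)) 0).symm

lemma apply_integral_orbit {G E : Type*} [Group G] [MeasurableSpace G] [MeasurableMul G]
    {μ : Measure G} [μ.IsMulLeftInvariant] [NormedAddCommGroup E] [NormedSpace ℝ E]
    [FiniteDimensional ℝ E] (ρ : G →* (E ≃ₗ[ℝ] E)) (x : E) (g : G) :
    ρ g (∫ h, ρ h x ∂μ) = ∫ h, ρ h x ∂μ :=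
  calc ρ g (∫ h, ρ h x ∂μ) = ∫ h, ρ g (ρ h x) ∂μ :=
        ((ρ g).toContinuousLinearEquiv.integral_comp_comm _).symm
    _ = ∫ h, ρ (g * h) x ∂μ := by simp only [map_mul, LinearEquiv.mul_apply]
    _ = ∫ h, ρ h x ∂μ := integral_mul_left_eq_self (fun h => ρ h x) g

theorem exists_timelike_fixed {G : Type*} [Group G] [TopologicalSpace G] [IsTopologicalGroup G]
    [CompactSpace G] [ConnectedSpace G] [MeasurableSpace G] [BorelSpace G]
    (ρ : G →* ((Fin 3 → ℝ) ≃ₗ[ℝ] (Fin 3 → ℝ))) (hcont : ∀ x, Continuous fun g => ρ g x)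
    (hpres : ∀ g x y, eta (ρ g x) (ρ g y) = eta x y) :
    ∃ v, eta v v < 0 ∧ ∀ g, ρ g v = v := by
  set e : Fin 3 → ℝ := ![1, 0, 0]
  have horbit : ∀ g, eta (ρ g e) (ρ g e) < 0 := fun g => by
    rw [hpres]; simp [eta, e]
  have hpos : ∀ g, 0 < ρ g e 0 :=
    ((continuous_apply 0).comp (hcont e)).pos_of_forall_ne_zero
      (fun g => ne_zero_of_eta_self_neg (horbit g)) (a := 1) (by simp [e])
  have hfuture : ∀ g, ‖spatial (ρ g e)‖ < ρ g e 0 := fun g => by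
    simpa [abs_of_pos (hpos g)] using (eta_self_neg_iff _).1 (horbit g)
  refine ⟨∫ g, ρ g e ∂Measure.haar, ?_, apply_integral_orbit ρ e⟩
  rw [eta_self_neg_iff]
  exact (norm_spatial_integral_lt (hcont e) hfuture).trans_le (le_abs_self _)

theorem stmt_1_general (φ : Circle →* ((Fin 3 → ℝ) ≃ₗ[ℝ] (Fin 3 → ℝ)))
    (hcont : ∀ x, Continuous fun z => φ z x)
    (hpres : ∀ z x y, eta (φ z x) (φ z y) = eta x y) :
    ∃ v : Fin 3 → ℝ, eta v v < 0 ∧ (∀ z, φ z v = v) ∧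
      (∀ w, eta v w = 0 → w ≠ 0 → 0 < eta w w) ∧
      (∀ z w, eta v w = 0 → eta v (φ z w) = 0) ∧
      (∀ x : Fin 3 → ℝ, ∃ (a : ℝ) (w : Fin 3 → ℝ), eta v w = 0 ∧ x = a • v + w) := by
  borelize Circle
  obtain ⟨v, hv, hfix⟩ := exists_timelike_fixed φ hcont hpres
  refine ⟨v, hv, hfix, fun w => eta_self_pos_of_eta_eq_zero hv, fun z w hw => ?_,
    exists_smul_add_of_eta_self_ne_zero hv.ne⟩
  rw [← hfix z, hpres, hw]

/-- Every continuous subgroup of O(1,2) isomorphic to the circle group U(1)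
fixes a timelike vector, and ℝ^{1,2} decomposes into an orthogonal sum of an
invariant timelike line and an invariant spacelike plane. -/
theorem stmt_1 (φ : Circle →* ((Fin 3 → ℝ) ≃ₗ[ℝ] (Fin 3 → ℝ)))
    (hcont : ∀ x, Continuous fun z => φ z x)
    (hinj : Function.Injective φ)
    (hpres : ∀ z x y, eta (φ z x) (φ z y) = eta x y) :
    ∃ v : Fin 3 → ℝ, eta v v < 0 ∧ (∀ z, φ z v = v) ∧
      (∀ w, eta v w = 0 → w ≠ 0 → 0 < eta w w) ∧
      (∀ z w, eta v w = 0 → eta v (φ z w) = 0) ∧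
      (∀ x : Fin 3 → ℝ, ∃ (a : ℝ) (w : Fin 3 → ℝ), eta v w = 0 ∧ x = a • v + w) :=
  stmt_1_general φ hcont hpres
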